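/- arXiv:1810.00386 — 2 statements merged into one kernel-verified Lean document; each statement's English description precedes it below -/
import Mathlib

section
/- For consecutive windows on overlapping supports, the squares of the window values sum to one: if k/ℓ ≤ λ ≤ (k+1)/ℓ for an integer k with 0 ≤ k < ℓ, then w_k(λ)² + w_{k+1}(λ)² = 1. -/
noncomputable def itersine (L : ℕ) (xi : ℤ) (lam : ℝ) : ℝ :=
  if ((xi : ℝ) - 1) / L ≤ lam ∧ lam ≤ ((xi : ℝ) + 1) / L then
    Real.sin (Real.pi / 2 * Real.cos (Real.pi / 2 * (L * lam - xi)) ^ 2)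
  else 0

theorem itersine_sq_consecutive_sum_one (L : ℕ) (hL : 0 < L) (k : ℤ) (hk : 0 ≤ k)
    (hkL : k < (L : ℤ)) (lam : ℝ) (hlo : (k : ℝ) / L ≤ lam) (hhi : lam ≤ ((k : ℝ) + 1) / L) :
    itersine L k lam ^ 2 + itersine L (k + 1) lam ^ 2 = 1 := by
  have hLpos : (0:ℝ) < L := by exact_mod_cast hL
  have h1 : ((k : ℝ) - 1) / L ≤ lam := le_trans (by gcongr; linarith) hlo
  have h2 : lam ≤ (((k:ℤ)+1 : ℤ) + 1 : ℝ) / L := le_trans hhi (by push_cast; gcongr; linarith)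
  rw [itersine, itersine, if_pos ⟨h1, hhi⟩, if_pos ⟨by push_cast; rw [add_sub_cancel_right]; exact hlo, by push_cast at h2 ⊢; linarith⟩]
  set t := Real.pi / 2 * (L * lam - k) with ht
  have harg : Real.pi / 2 * ((L:ℝ) * lam - ((k:ℤ)+1 : ℤ)) = t - Real.pi / 2 := by
    push_cast; ring
  rw [harg, Real.cos_sub_pi_div_two]
  have hsin : Real.pi / 2 * Real.sin t ^ 2 = Real.pi / 2 - Real.pi / 2 * Real.cos t ^ 2 := by
    linear_combination (Real.pi/2) * Real.sin_sq_add_cos_sq t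
  rw [hsin, Real.sin_pi_div_two_sub]
  exact Real.sin_sq_add_cos_sq _
end

section
/- For every λ ∈ [0,1], the sum over ξ = 0,…,ℓ of w_ξ(λ)² equals 1 (the itersine windows form a tight partition of unity in the squared sense on [0,1]). -/
open Real

theorem sin_sq_bump_add_sin_sq_bump_sub_one (s : ℝ) :
    sin (π / 2 * cos (π / 2 * s) ^ 2) ^ 2 + sin (π / 2 * cos (π / 2 * (s - 1)) ^ 2) ^ 2 = 1 := by
  have hshift : cos (π / 2 * (s - 1)) = sin (π / 2 * s) := by
    rw [← cos_pi_div_two_sub, ← cos_neg]; congr 1; ring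
  have hcompl : π / 2 * sin (π / 2 * s) ^ 2 = π / 2 - π / 2 * cos (π / 2 * s) ^ 2 := by
    rw [sin_sq]; ring
  rw [hshift, hcompl, sin_pi_div_two_sub, sin_sq_add_cos_sq]

section itersine

variable {L : ℕ} {ξ : ℤ} {lam : ℝ}

theorem itersine_window_iff (hL : 0 < L) :
    ((ξ : ℝ) - 1) / L ≤ lam ∧ lam ≤ ((ξ : ℝ) + 1) / L ↔ |L * lam - ξ| ≤ 1 := by
  have hL' : (0 : ℝ) < L := by exact_mod_cast hL
  rw [div_le_iff₀ hL', le_div_iff₀ hL', abs_le]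
  constructor <;> rintro ⟨h₁, h₂⟩ <;> constructor <;> linarith

theorem itersine_of_abs_le (hL : 0 < L) (h : |L * lam - ξ| ≤ 1) :
    itersine L ξ lam = sin (π / 2 * cos (π / 2 * (L * lam - ξ)) ^ 2) :=
  if_pos ((itersine_window_iff hL).2 h)

theorem itersine_eq_zero_of_one_le_abs (hL : 0 < L) (h : 1 ≤ |L * lam - ξ|) :
    itersine L ξ lam = 0 := by
  unfold itersine
  split_ifs with hwin
  · have hedge : |L * lam - ξ| = 1 := le_antisymm ((itersine_window_iff hL).1 hwin) h
    rcases (abs_eq zero_le_one).1 hedge with hs | hs <;> simp [hs]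
  · rfl

end itersine

theorem exists_nat_le_le_add_one {L : ℕ} (hL : 0 < L) {t : ℝ} (ht₀ : 0 ≤ t)
    (htL : t ≤ L) :
    ∃ n : ℕ, n + 1 ≤ L ∧ (n : ℝ) ≤ t ∧ t ≤ n + 1 := by
  rcases htL.lt_or_eq with htL | rfl
  · exact ⟨⌊t⌋₊, (Nat.floor_lt ht₀).2 htL, Nat.floor_le ht₀, (Nat.lt_floor_add_one t).le⟩
  · refine ⟨L - 1, by omega, ?_, ?_⟩ <;> push_cast [Nat.cast_sub hL] <;> linarith

theorem itersine_tight_partition (L : ℕ) (hL : 0 < L) (lam : ℝ)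
    (hlam : lam ∈ Set.Icc (0 : ℝ) 1) :
    ∑ xi ∈ Finset.range (L + 1), itersine L (xi : ℤ) lam ^ 2 = 1 := by
  obtain ⟨hlam₀, hlam₁⟩ := hlam
  obtain ⟨n, hnL, hn, hn₁⟩ := exists_nat_le_le_add_one hL (t := L * lam) (by positivity)
    (mul_le_of_le_one_right (Nat.cast_nonneg L) hlam₁)
  rw [Finset.sum_eq_add_of_mem n (n + 1) (Finset.mem_range.2 (by omega))
    (Finset.mem_range.2 (by omega)) (by omega)]
  · rw [itersine_of_abs_le hL (by push_cast; rw [abs_le]; constructor <;> linarith),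
      itersine_of_abs_le hL (by push_cast; rw [abs_le]; constructor <;> linarith)]
    push_cast
    rw [← sub_sub]
    exact sin_sq_bump_add_sin_sq_bump_sub_one _
  · rintro c - ⟨hcn, hcn₁⟩
    rw [itersine_eq_zero_of_one_le_abs hL, zero_pow two_ne_zero]
    rcases (by omega : c + 1 ≤ n ∨ n + 2 ≤ c) with hc | hc
    · have : (c : ℝ) + 1 ≤ n := by exact_mod_cast hc
      rw [le_abs]; left; push_cast; linarith
    · have : (n : ℝ) + 2 ≤ c := by exact_mod_cast hc
      rw [le_abs]; right; push_cast; linarith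
end
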